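/- Concretely for n ≥ 2: if b_0,...,b_{n-1}, c_0,...,c_{n-1} are nonzero vectors in an inner product space H with dim H ≤ 2(n-1), and ⟨b_j, c_k⟩ = 0 for all (j,k) ≠ (0,0), then either the vectors b_1,...,b_{n-1} are linearly dependent, or the vectors c_1,...,c_{n-1} are linearly dependent, or ⟨b_0, c_0⟩ = 0. -/
import Mathlib


open scoped InnerProductSpace

/-- For `n ≥ 2`: if `b₀,…,b_{n-1}, c₀,…,c_{n-1}` are nonzero vectors in an
inner product space `H` with `dim H ≤ 2(n-1)` and `⟨b_j, c_k⟩ = 0` for all `(j,k) ≠ (0,0)`,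
then either `b₁,…,b_{n-1}` are linearly dependent, or `c₁,…,c_{n-1}` are linearly
dependent, or `⟨b₀, c₀⟩ = 0`. -/
theorem stmt1 {H : Type*} [NormedAddCommGroup H] [InnerProductSpace ℂ H]
    [FiniteDimensional ℂ H] (n : ℕ) (hn : 2 ≤ n)
    (hdim : Module.finrank ℂ H ≤ 2 * (n - 1))
    (b c : Fin n → H) (hb : ∀ i, b i ≠ 0) (hc : ∀ i, c i ≠ 0)
    (horth : ∀ j k : Fin n,
      (j, k) ≠ ((⟨0, by omega⟩ : Fin n), (⟨0, by omega⟩ : Fin n)) → ⟪b j, c k⟫_ℂ = 0) :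
    ¬ LinearIndependent ℂ (fun i : {i : Fin n // i.1 ≠ 0} => b i.1) ∨
    ¬ LinearIndependent ℂ (fun i : {i : Fin n // i.1 ≠ 0} => c i.1) ∨
    ⟪b (⟨0, by omega⟩ : Fin n), c (⟨0, by omega⟩ : Fin n)⟫_ℂ = 0 := by
  by_cases hbI : LinearIndependent ℂ (fun i : {i : Fin n // i.1 ≠ 0} => b i.1)
  · by_cases hcI : LinearIndependent ℂ (fun i : {i : Fin n // i.1 ≠ 0} => c i.1)
    · right; right
      set z : Fin n := ⟨0, by omega⟩ with hz
      set B := Submodule.span ℂ (Set.range (fun i : {i : Fin n // i.1 ≠ 0} => b i.1)) with hB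
      set C := Submodule.span ℂ (Set.range (fun i : {i : Fin n // i.1 ≠ 0} => c i.1)) with hC
      have hcard : Fintype.card {i : Fin n // i.1 ≠ 0} = n - 1 := by
        have h := Fintype.card_subtype_compl (fun i : Fin n => i.1 = 0)
        have h1 : Fintype.card {i : Fin n // i.1 = 0} = 1 := by
          rw [Fintype.card_eq_one_iff]
          exact ⟨⟨z, rfl⟩, fun y => Subtype.ext (Fin.ext y.2)⟩
        simpa [h1] using h
      have hBd : Module.finrank ℂ B = n - 1 := by
        rw [hB, finrank_span_eq_card hbI, hcard]
      have hCd : Module.finrank ℂ C = n - 1 := by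
        rw [hC, finrank_span_eq_card hcI, hcard]
      have memCo : ∀ x : H, (∀ k : Fin n, k.1 ≠ 0 → ⟪x, c k⟫_ℂ = 0) → x ∈ Cᗮ := by
        intro x hx
        rw [Submodule.mem_orthogonal]
        intro u hu
        have : ⟪x, u⟫_ℂ = 0 := by
          induction hu using Submodule.span_induction with
          | mem y hy =>
            obtain ⟨k, rfl⟩ := hy
            exact hx k.1 k.2
          | zero => simp
          | add y z _ _ hy hz => simp [inner_add_right, hy, hz]
          | smul a y _ hy => simp [inner_smul_right, hy]
        rw [← inner_conj_symm, this, map_zero]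
      have hBle : B ≤ Cᗮ := by
        rw [hB, Submodule.span_le]
        rintro x ⟨j, rfl⟩
        exact memCo _ (fun k hk => horth j.1 k
          (fun h => hk (congrArg Fin.val (Prod.ext_iff.1 h).2)))
      have hsum : Module.finrank ℂ C + Module.finrank ℂ Cᗮ = Module.finrank ℂ H :=
        Submodule.finrank_add_finrank_orthogonal C
      have hBeq : B = Cᗮ := Submodule.eq_of_le_of_finrank_le hBle (by omega)
      have hb0 : b z ∈ B := by
        rw [hBeq]
        exact memCo _ (fun k hk => horth z k
          (fun h => hk (congrArg Fin.val (Prod.ext_iff.1 h).2)))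
      have hcz : ∀ x ∈ B, ⟪c z, x⟫_ℂ = 0 := by
        intro x hx
        induction hx using Submodule.span_induction with
        | mem y hy =>
          obtain ⟨j, rfl⟩ := hy
          rw [← inner_conj_symm, horth j.1 z
            (fun h => j.2 (congrArg Fin.val (Prod.ext_iff.1 h).1)), map_zero]
        | zero => simp
        | add y w _ _ hy hw => simp [inner_add_right, hy, hw]
        | smul a y _ hy => simp [inner_smul_right, hy]
      rw [← inner_conj_symm, hcz _ hb0, map_zero]
    · right; left; exact hcI
  · left; exact hbI
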